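/- The Pastro polynomials and their biorthogonal partners satisfy the first Baxter recurrence: for every nonnegative integer n and all real x ≠ 0, P_{n+1}(x;a,b;q) = x P_n(x;a,b;q) - α_n x^n R_n(x;a,b;q), where α_n = -(a^{-1} b q)^{n+1} (a b^{-1};q)_{n+1} / (b;q)_{n+1}. -/

import Mathlib

/-
Compare coefficients of `x ^ k`. With `c_{n,k}` the coefficients of `P_n`, the quotient
`c_{n,k-1} / c_{n+1,k}` is an explicit rational function `μ_n(k)` of `q ^ k` (`pastroCoeffRatio`),
which vanishes at `k = 0` and equals `1` at `k = n + 1`. The recurrence therefore says that the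
`x ^ k`-coefficient of `α_n x^n R_n(x)` is `c_{n+1,k} (μ_n(k) - 1)`. Both sides of this identity are
`q`-hypergeometric in `k` with the same term ratio, so it suffices to check it at `k = n`; there the
reversal `(z q^{-n};q)_n = (-z)^n q^{-n(n+1)/2} (z⁻¹q;q)_n` evaluates `α_n` times the leading factor
of `R_n` in closed form.
-/

/-- The q-Pochhammer symbol `(z;q)_k = ∏_{j=0}^{k-1} (1 - z q^j)`. -/
noncomputable def qPoch (q z : ℝ) (k : ℕ) : ℝ :=
  ∏ j ∈ Finset.range k, (1 - z * q ^ j)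

/-- Coefficient `c_{n,k}` of the monic Pastro polynomial. -/
noncomputable def pastroCoeff (q a b : ℝ) (n k : ℕ) : ℝ :=
  (qPoch q (a⁻¹ * b * q ^ (1 - (n : ℤ))) n * qPoch q q n /
      (qPoch q (q ^ (-(n : ℤ))) n * qPoch q b n)) *
    (qPoch q (q ^ (-(n : ℤ))) k * qPoch q b k /
      (qPoch q (a⁻¹ * b * q ^ (1 - (n : ℤ))) k * qPoch q q k))

/-- The monic Pastro polynomial `P_n(x;a,b;q)`. -/
noncomputable def pastroP (q a b : ℝ) (n : ℕ) (x : ℝ) : ℝ :=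
  ∑ k ∈ Finset.range (n + 1), pastroCoeff q a b n k * x ^ k

/-- The biorthogonal partner `R_n(x;a,b;q)` of the Pastro polynomials. -/
noncomputable def pastroR (q a b : ℝ) (n : ℕ) (x : ℝ) : ℝ :=
  (qPoch q (q ^ (-(n : ℤ))) n * qPoch q (b * q⁻¹) n /
      (qPoch q (a⁻¹ * b * q ^ (-(n : ℤ))) n * qPoch q q n)) *
    ∑ k ∈ Finset.range (n + 1),
      (qPoch q (q ^ (-(n : ℤ))) k * qPoch q (a * b⁻¹ * q) k /
          (qPoch q (b⁻¹ * q ^ (2 - (n : ℤ))) k * qPoch q q k)) *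
        (q ^ 2 / (a * x)) ^ k

open Finset

section Genericity

variable {q : ℝ}

lemma mul_zpow_mul_zpow_ne_one (hq : q ≠ 0) {c : ℝ} (hc : ∀ m : ℤ, c * q ^ m ≠ 1) (m₀ m : ℤ) :
    c * q ^ m₀ * q ^ m ≠ 1 := by
  simpa [mul_assoc, zpow_add₀ hq] using hc (m₀ + m)

lemma inv_mul_zpow_ne_one (hq : q ≠ 0) {c : ℝ} (hc : ∀ m : ℤ, c * q ^ m ≠ 1) (m : ℤ) :
    c⁻¹ * q ^ m ≠ 1 := by
  intro h
  have hc₀ : c ≠ 0 := by rintro rfl; simp at h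
  apply hc (-m)
  rw [(inv_mul_eq_one₀ hc₀).1 h, zpow_neg, mul_inv_cancel₀ (zpow_ne_zero _ hq)]

lemma one_sub_pow_ne_zero (hq1 : ∀ k : ℤ, k ≠ 0 → q ^ k ≠ 1) {k : ℕ} (hk : k ≠ 0) :
    1 - q ^ k ≠ 0 :=
  sub_ne_zero.2 (by simpa using (hq1 k (by omega)).symm)

lemma one_sub_mul_pow_ne_zero {c : ℝ} (hc : ∀ m : ℤ, c * q ^ m ≠ 1) (k : ℕ) :
    1 - c * q ^ k ≠ 0 :=
  sub_ne_zero.2 (by simpa using (hc k).symm)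

lemma self_sub_mul_pow_ne_zero (hq : q ≠ 0) {c : ℝ} (hc : ∀ m : ℤ, c * q ^ m ≠ 1) (k : ℕ) :
    q - c * q ^ k ≠ 0 := by
  have h := hc (k - 1)
  rw [zpow_sub_one₀ hq, zpow_natCast] at h
  contrapose! h
  field_simp
  linarith

lemma pow_sub_ne_zero (hq : q ≠ 0) {c : ℝ} (hc : ∀ m : ℤ, c * q ^ m ≠ 1) (k : ℕ) :
    q ^ k - c ≠ 0 := by
  have h := hc (-k)
  rw [zpow_neg, zpow_natCast] at h
  contrapose! h
  rw [← sub_eq_zero.1 h, mul_inv_cancel₀ (pow_ne_zero _ hq)]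

end Genericity

section QPochhammer

variable {q : ℝ}

lemma qPoch_zero (q z : ℝ) : qPoch q z 0 = 1 := prod_range_zero _

lemma qPoch_succ (q z : ℝ) (k : ℕ) : qPoch q z (k + 1) = qPoch q z k * (1 - z * q ^ k) :=
  prod_range_succ _ _

lemma qPoch_succ' (q z : ℝ) (k : ℕ) : qPoch q z (k + 1) = (1 - z) * qPoch q (z * q) k := by
  rw [qPoch, prod_range_succ', mul_comm, qPoch]
  simp only [pow_succ', pow_zero, mul_one, mul_assoc]

lemma qPoch_ne_zero {z : ℝ} {k : ℕ} (h : ∀ j < k, z * q ^ j ≠ 1) : qPoch q z k ≠ 0 :=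
  prod_ne_zero_iff.2 fun j hj => sub_ne_zero.2 (h j (mem_range.1 hj)).symm

lemma qPoch_ne_zero_of_mul_zpow_ne_one {c : ℝ} (hc : ∀ m : ℤ, c * q ^ m ≠ 1) (k : ℕ) :
    qPoch q c k ≠ 0 :=
  qPoch_ne_zero fun j _ => by simpa using hc j

lemma qPoch_self_ne_zero (hq1 : ∀ k : ℤ, k ≠ 0 → q ^ k ≠ 1) (k : ℕ) : qPoch q q k ≠ 0 :=
  qPoch_ne_zero fun j _ => by
    rw [← pow_succ', ← zpow_natCast]
    exact hq1 _ (by omega)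

lemma qPoch_zpow_neg_ne_zero (hq : q ≠ 0) (hq1 : ∀ k : ℤ, k ≠ 0 → q ^ k ≠ 1) {k n : ℕ}
    (hk : k ≤ n) : qPoch q (q ^ (-(n : ℤ))) k ≠ 0 :=
  qPoch_ne_zero fun j hj => by
    simpa only [zpow_add₀ hq, zpow_natCast] using hq1 (-n + j) (by omega)

lemma qPoch_reverse (hq : q ≠ 0) {z : ℝ} (hz : z ≠ 0) (n : ℕ) :
    qPoch q (z * q ^ (-(n : ℤ))) n =
      (-z) ^ n * (∏ i ∈ range n, q ^ (i + 1))⁻¹ * qPoch q (z⁻¹ * q) n := by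
  induction n with
  | zero => simp [qPoch_zero]
  | succ n ih =>
    have hshift : z * q ^ (-((n + 1 : ℕ) : ℤ)) * q = z * q ^ (-(n : ℤ)) := by
      simp only [zpow_neg, zpow_natCast, pow_succ]
      field_simp
    rw [qPoch_succ', hshift, ih, qPoch_succ, prod_range_succ]
    simp only [zpow_neg, zpow_natCast]
    field_simp
    ring

end QPochhammer

section Pastro

noncomputable def pastroAlpha (q a b : ℝ) (n : ℕ) : ℝ :=
  -(a⁻¹ * b * q) ^ (n + 1) * qPoch q (a * b⁻¹) (n + 1) / qPoch q b (n + 1)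

-- the coefficient of `x⁻¹ ^ m` in `R_n(x)`
noncomputable def pastroRCoeff (q a b : ℝ) (n m : ℕ) : ℝ :=
  (qPoch q (q ^ (-(n : ℤ))) n * qPoch q (b * q⁻¹) n /
      (qPoch q (a⁻¹ * b * q ^ (-(n : ℤ))) n * qPoch q q n)) *
    (qPoch q (q ^ (-(n : ℤ))) m * qPoch q (a * b⁻¹ * q) m /
      (qPoch q (b⁻¹ * q ^ (2 - (n : ℤ))) m * qPoch q q m)) * (q ^ 2 / a) ^ m

noncomputable def pastroCoeffRatio (q b : ℝ) (n k : ℕ) : ℝ :=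
  q * (1 - b * q ^ n) * (1 - q ^ k) / ((1 - q ^ (n + 1)) * (q - b * q ^ k))

variable {q a b : ℝ}

lemma pastroCoeff_succ (n k : ℕ) :
    pastroCoeff q a b n (k + 1) = pastroCoeff q a b n k *
      ((1 - q ^ (-(n : ℤ)) * q ^ k) * (1 - b * q ^ k) /
        ((1 - a⁻¹ * b * q ^ (1 - (n : ℤ)) * q ^ k) * (1 - q ^ (k + 1)))) := by
  simp only [pastroCoeff, qPoch_succ, div_eq_mul_inv, mul_inv, pow_succ']
  ring

lemma pastroRCoeff_succ (n m : ℕ) :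
    pastroRCoeff q a b n (m + 1) = pastroRCoeff q a b n m *
      ((1 - q ^ (-(n : ℤ)) * q ^ m) * (1 - a * b⁻¹ * q * q ^ m) /
        ((1 - b⁻¹ * q ^ (2 - (n : ℤ)) * q ^ m) * (1 - q ^ (m + 1))) * (q ^ 2 / a)) := by
  simp only [pastroRCoeff, qPoch_succ, div_eq_mul_inv, mul_inv, mul_pow, pow_succ']
  ring

lemma pastroCoeff_self (hq : q ≠ 0) (hq1 : ∀ k : ℤ, k ≠ 0 → q ^ k ≠ 1)
    (hbq : ∀ m : ℤ, b * q ^ m ≠ 1) (habq : ∀ m : ℤ, a⁻¹ * b * q ^ m ≠ 1) (n : ℕ) :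
    pastroCoeff q a b n n = 1 := by
  have h₁ := qPoch_ne_zero_of_mul_zpow_ne_one (mul_zpow_mul_zpow_ne_one hq habq (1 - n)) n
  have h₂ := qPoch_self_ne_zero hq1 n
  have h₃ := qPoch_zpow_neg_ne_zero hq hq1 le_rfl (n := n)
  have h₄ := qPoch_ne_zero_of_mul_zpow_ne_one hbq n
  rw [pastroCoeff, div_mul_div_comm, div_eq_one_iff_eq (by positivity)]
  ring

lemma pastroCoeff_eq_mul_ratio (hq : q ≠ 0) (hq1 : ∀ k : ℤ, k ≠ 0 → q ^ k ≠ 1)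
    (hbq : ∀ m : ℤ, b * q ^ m ≠ 1) (habq : ∀ m : ℤ, a⁻¹ * b * q ^ m ≠ 1) (n k : ℕ) :
    pastroCoeff q a b n k = pastroCoeff q a b (n + 1) (k + 1) * pastroCoeffRatio q b n (k + 1) := by
  have hA : a⁻¹ * b * q ^ (1 - ((n + 1 : ℕ) : ℤ)) * q = a⁻¹ * b * q ^ (1 - (n : ℤ)) := by
    rw [mul_assoc, ← zpow_add_one₀ hq]; push_cast; ring_nf
  have hI : q ^ (-((n + 1 : ℕ) : ℤ)) * q = q ^ (-(n : ℤ)) := by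
    rw [← zpow_add_one₀ hq]; push_cast; ring_nf
  have hshift : pastroCoeff q a b (n + 1) (k + 1) = pastroCoeff q a b n k *
      ((1 - a⁻¹ * b * q ^ (1 - ((n + 1 : ℕ) : ℤ))) * (1 - q ^ (n + 1)) /
          ((1 - q ^ (-((n + 1 : ℕ) : ℤ))) * (1 - b * q ^ n)) *
        ((1 - q ^ (-((n + 1 : ℕ) : ℤ))) * (1 - b * q ^ k) /
          ((1 - a⁻¹ * b * q ^ (1 - ((n + 1 : ℕ) : ℤ))) * (1 - q ^ (k + 1))))) := by
    simp only [pastroCoeff, qPoch_succ' q (a⁻¹ * b * q ^ (1 - ((n + 1 : ℕ) : ℤ))),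
      qPoch_succ' q (q ^ (-((n + 1 : ℕ) : ℤ))), hA, hI, qPoch_succ q q, qPoch_succ q b,
      div_eq_mul_inv, mul_inv, pow_succ']
    ring
  have hu : 1 - a⁻¹ * b * q ^ (1 - ((n + 1 : ℕ) : ℤ)) ≠ 0 := sub_ne_zero.2 (habq _).symm
  have hv : 1 - q ^ (-((n + 1 : ℕ) : ℤ)) ≠ 0 := sub_ne_zero.2 (hq1 _ (by omega)).symm
  have h₁ := self_sub_mul_pow_ne_zero hq hbq (k + 1)
  have h₂ := one_sub_mul_pow_ne_zero hbq n
  have h₃ := one_sub_pow_ne_zero hq1 (k := k + 1) (by omega)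
  have h₄ := one_sub_pow_ne_zero hq1 (k := n + 1) (by omega)
  rw [hshift, mul_assoc, pastroCoeffRatio]
  generalize 1 - a⁻¹ * b * q ^ (1 - ((n + 1 : ℕ) : ℤ)) = u at hu ⊢
  generalize 1 - q ^ (-((n + 1 : ℕ) : ℤ)) = v at hv ⊢
  field_simp
  ring

lemma pastroAlpha_mul_pastroRCoeff_zero (hq : q ≠ 0) (hq1 : ∀ k : ℤ, k ≠ 0 → q ^ k ≠ 1)
    (ha : a ≠ 0) (hb : b ≠ 0) (hbq : ∀ m : ℤ, b * q ^ m ≠ 1)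
    (habq : ∀ m : ℤ, a⁻¹ * b * q ^ m ≠ 1) (n : ℕ) :
    pastroAlpha q a b n * pastroRCoeff q a b n 0 =
      (1 - a⁻¹ * b) * q ^ (n + 1) * (1 - b * q⁻¹) / ((1 - b * q ^ n) * (1 - b * q⁻¹ * q ^ n)) := by
  have hinv : (a⁻¹ * b)⁻¹ = a * b⁻¹ := by rw [mul_inv, inv_inv]
  have hrev₁ : qPoch q (q ^ (-(n : ℤ))) n =
      (-1) ^ n * (∏ i ∈ range n, q ^ (i + 1))⁻¹ * qPoch q q n := by
    simpa using qPoch_reverse hq one_ne_zero n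
  have hrev₂ := qPoch_reverse hq (mul_ne_zero (inv_ne_zero ha) hb) n
  rw [hinv] at hrev₂
  have hshift : qPoch q (b * q⁻¹) n * (1 - b * q⁻¹ * q ^ n) = (1 - b * q⁻¹) * qPoch q b n := by
    rw [← qPoch_succ, qPoch_succ', inv_mul_cancel_right₀ hq]
  have hP : (∏ i ∈ range n, q ^ (i + 1)) ≠ 0 := prod_ne_zero_iff.2 fun i _ => pow_ne_zero _ hq
  have hQ := qPoch_self_ne_zero hq1 n
  have hX : qPoch q (a * b⁻¹ * q) n ≠ 0 := by
    simpa [hinv] using qPoch_ne_zero_of_mul_zpow_ne_one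
      (mul_zpow_mul_zpow_ne_one hq (inv_mul_zpow_ne_one hq habq) 1) n
  have hB := qPoch_ne_zero_of_mul_zpow_ne_one hbq n
  have hb₁ : 1 - b * q⁻¹ * q ^ n ≠ 0 := by
    simpa using one_sub_mul_pow_ne_zero (mul_zpow_mul_zpow_ne_one hq hbq (-1)) n
  rw [pastroAlpha, pastroRCoeff, hrev₁, hrev₂, qPoch_succ' q (a * b⁻¹), qPoch_succ q b,
    eq_div_of_mul_eq hb₁ hshift]
  simp only [qPoch_zero, pow_zero, mul_one, div_one, neg_pow (a⁻¹ * b), mul_pow, inv_pow]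
  generalize ∏ i ∈ range n, q ^ (i + 1) = P at hP ⊢
  generalize qPoch q (a * b⁻¹ * q) n = X at hX ⊢
  field_simp
  ring

lemma pastroAlpha_mul_pastroRCoeff_zero_eq_pastroCoeff (hq : q ≠ 0)
    (hq1 : ∀ k : ℤ, k ≠ 0 → q ^ k ≠ 1) (ha : a ≠ 0) (hb : b ≠ 0) (hbq : ∀ m : ℤ, b * q ^ m ≠ 1)
    (habq : ∀ m : ℤ, a⁻¹ * b * q ^ m ≠ 1) (n : ℕ) :
    pastroAlpha q a b n * pastroRCoeff q a b n 0 =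
      pastroCoeff q a b (n + 1) n * (pastroCoeffRatio q b n n - 1) := by
  have htop := pastroCoeff_succ (q := q) (a := a) (b := b) (n + 1) n
  have e₁ : q ^ (-((n + 1 : ℕ) : ℤ)) * q ^ n = q⁻¹ := by
    rw [← zpow_natCast, ← zpow_add₀ hq]; push_cast; ring_nf; exact zpow_neg_one q
  have e₂ : a⁻¹ * b * q ^ (1 - ((n + 1 : ℕ) : ℤ)) * q ^ n = a⁻¹ * b := by
    rw [mul_assoc, ← zpow_natCast, ← zpow_add₀ hq]; push_cast; ring_nf; simp
  rw [pastroCoeff_self hq hq1 hbq habq, e₁, e₂] at htop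
  rw [eq_inv_of_mul_eq_one_left htop.symm, pastroAlpha_mul_pastroRCoeff_zero hq hq1 ha hb hbq habq,
    pastroCoeffRatio]
  have h₁ := one_sub_pow_ne_zero hq1 (k := n + 1) (by omega)
  have h₂ : q - 1 ≠ 0 := sub_ne_zero.2 (by simpa using hq1 1 one_ne_zero)
  have h₃ := self_sub_mul_pow_ne_zero hq hbq n
  field_simp
  ring

lemma pastroAlpha_mul_pastroRCoeff (hq : q ≠ 0) (hq1 : ∀ k : ℤ, k ≠ 0 → q ^ k ≠ 1)
    (ha : a ≠ 0) (hb : b ≠ 0) (hbq : ∀ m : ℤ, b * q ^ m ≠ 1)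
    (habq : ∀ m : ℤ, a⁻¹ * b * q ^ m ≠ 1) (k m : ℕ) :
    pastroAlpha q a b (k + m) * pastroRCoeff q a b (k + m) m =
      pastroCoeff q a b (k + m + 1) k * (pastroCoeffRatio q b (k + m) k - 1) := by
  -- downward induction on `k` at fixed degree `n = k + m`
  induction m generalizing k with
  | zero => exact pastroAlpha_mul_pastroRCoeff_zero_eq_pastroCoeff hq hq1 ha hb hbq habq k
  | succ m ih =>
    have ih' := ih (k + 1)
    rw [show k + 1 + m = k + (m + 1) by ring] at ih'
    rw [pastroRCoeff_succ, ← mul_assoc, ih', pastroCoeff_succ (k + (m + 1) + 1) k, mul_assoc,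
      mul_assoc]
    congr 1
    have e₁ : q ^ (-((k + (m + 1) + 1 : ℕ) : ℤ)) * q ^ k = (q ^ (m + 2))⁻¹ := by
      rw [← zpow_natCast, ← zpow_natCast, ← zpow_neg, ← zpow_add₀ hq]; push_cast; ring_nf
    have e₂ : q ^ (1 - ((k + (m + 1) + 1 : ℕ) : ℤ)) * q ^ k = (q ^ (m + 1))⁻¹ := by
      rw [← zpow_natCast, ← zpow_natCast, ← zpow_neg, ← zpow_add₀ hq]; push_cast; ring_nf
    have e₃ : q ^ (-((k + (m + 1) : ℕ) : ℤ)) * q ^ m = (q ^ (k + 1))⁻¹ := by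
      rw [← zpow_natCast, ← zpow_natCast, ← zpow_neg, ← zpow_add₀ hq]; push_cast; ring_nf
    have e₄ : q ^ (2 - ((k + (m + 1) : ℕ) : ℤ)) * q ^ m = q * (q ^ k)⁻¹ := by
      rw [← zpow_natCast, ← zpow_natCast, ← zpow_neg, ← zpow_add₀ hq, ← zpow_one_add₀ hq]
      push_cast; ring_nf
    simp only [mul_assoc, e₁, e₂, e₃, e₄, pastroCoeffRatio]
    have h₁ : a * q ^ (m + 1) - b ≠ 0 := by
      have := mul_ne_zero ha (pow_sub_ne_zero hq habq (m + 1))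
      rwa [mul_sub, ← mul_assoc, mul_inv_cancel₀ ha, one_mul] at this
    have h₂ : b * q ^ k - q ≠ 0 := by
      rw [← neg_sub]; exact neg_ne_zero.2 (self_sub_mul_pow_ne_zero hq hbq k)
    have h₃ := self_sub_mul_pow_ne_zero hq hbq k
    have h₄ := self_sub_mul_pow_ne_zero hq hbq (k + 1)
    have h₅ := one_sub_pow_ne_zero hq1 (k := k + 1) (by omega)
    have h₆ := one_sub_pow_ne_zero hq1 (k := m + 1) (by omega)
    have h₇ := one_sub_pow_ne_zero hq1 (k := k + (m + 1) + 1) (by omega)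
    field_simp
    ring

lemma pastroCoeffRatio_zero (q b : ℝ) (n : ℕ) : pastroCoeffRatio q b n 0 = 0 := by
  simp [pastroCoeffRatio]

lemma pastroCoeffRatio_succ_self (hq : q ≠ 0) (hq1 : ∀ k : ℤ, k ≠ 0 → q ^ k ≠ 1)
    (hbq : ∀ m : ℤ, b * q ^ m ≠ 1) (n : ℕ) : pastroCoeffRatio q b n (n + 1) = 1 := by
  have h₁ := one_sub_pow_ne_zero hq1 (k := n + 1) (by omega)
  have h₂ := self_sub_mul_pow_ne_zero hq hbq (n + 1)
  rw [pastroCoeffRatio, div_eq_one_iff_eq (mul_ne_zero h₁ h₂)]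
  ring

lemma mul_pastroP (hq : q ≠ 0) (hq1 : ∀ k : ℤ, k ≠ 0 → q ^ k ≠ 1)
    (hbq : ∀ m : ℤ, b * q ^ m ≠ 1) (habq : ∀ m : ℤ, a⁻¹ * b * q ^ m ≠ 1) (n : ℕ) (x : ℝ) :
    x * pastroP q a b n x =
      ∑ k ∈ range (n + 2), pastroCoeff q a b (n + 1) k * pastroCoeffRatio q b n k * x ^ k := by
  rw [sum_range_succ', pastroCoeffRatio_zero, mul_zero, zero_mul, add_zero, pastroP, mul_sum]
  refine sum_congr rfl fun k _ => ?_
  rw [pastroCoeff_eq_mul_ratio hq hq1 hbq habq]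
  ring

lemma pow_mul_pastroR {x : ℝ} (hx : x ≠ 0) (n : ℕ) :
    x ^ n * pastroR q a b n x = ∑ k ∈ range (n + 1), pastroRCoeff q a b n (n - k) * x ^ k := by
  rw [← sum_range_reflect, pastroR, mul_sum, mul_sum]
  refine sum_congr rfl fun j hj => ?_
  have hj : j ≤ n := Nat.lt_succ_iff.1 (mem_range.1 hj)
  have hxn : x ^ n = x ^ (n - j) * x ^ j := by rw [← pow_add, Nat.sub_add_cancel hj]
  rw [Nat.add_sub_cancel, Nat.sub_sub_self hj, pastroRCoeff, hxn, div_mul_eq_div_div (q ^ 2) a x,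
    div_pow]
  simp only [mul_div_assoc']
  rw [div_eq_iff (pow_ne_zero _ hx)]
  ring

lemma pastroAlpha_mul_pow_mul_pastroR (hq : q ≠ 0) (hq1 : ∀ k : ℤ, k ≠ 0 → q ^ k ≠ 1)
    (ha : a ≠ 0) (hb : b ≠ 0) (hbq : ∀ m : ℤ, b * q ^ m ≠ 1)
    (habq : ∀ m : ℤ, a⁻¹ * b * q ^ m ≠ 1) {x : ℝ} (hx : x ≠ 0) (n : ℕ) :
    pastroAlpha q a b n * x ^ n * pastroR q a b n x =
      ∑ k ∈ range (n + 1),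
        pastroCoeff q a b (n + 1) k * (pastroCoeffRatio q b n k - 1) * x ^ k := by
  rw [mul_assoc, pow_mul_pastroR hx, mul_sum]
  refine sum_congr rfl fun k hk => ?_
  obtain ⟨m, rfl⟩ := Nat.exists_eq_add_of_le (Nat.lt_succ_iff.1 (mem_range.1 hk))
  rw [Nat.add_sub_cancel_left, ← mul_assoc,
    pastroAlpha_mul_pastroRCoeff hq hq1 ha hb hbq habq]

end Pastro

/-- First Baxter recurrence: `P_{n+1}(x) = x P_n(x) - α_n x^n R_n(x)` with
`α_n = -(a⁻¹ b q)^(n+1) (a b⁻¹;q)_{n+1} / (b;q)_{n+1}`. -/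
theorem pastro_baxter_first (q a b : ℝ) (hq : q ≠ 0) (hq1 : ∀ k : ℤ, k ≠ 0 → q ^ k ≠ 1)
    (ha : a ≠ 0) (hb : b ≠ 0)
    (hbq : ∀ m : ℤ, b * q ^ m ≠ 1) (habq : ∀ m : ℤ, a⁻¹ * b * q ^ m ≠ 1)
    (n : ℕ) (x : ℝ) (hx : x ≠ 0) :
    pastroP q a b (n + 1) x =
      x * pastroP q a b n x -
        (-(a⁻¹ * b * q) ^ (n + 1) * qPoch q (a * b⁻¹) (n + 1) / qPoch q b (n + 1)) *
          x ^ n * pastroR q a b n x := by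
  rw [← pastroAlpha, pastroAlpha_mul_pow_mul_pastroR hq hq1 ha hb hbq habq hx,
    mul_pastroP hq hq1 hbq habq, pastroP, sum_range_succ _ (n + 1), sum_range_succ _ (n + 1),
    pastroCoeffRatio_succ_self hq hq1 hbq]
  simp only [mul_sub, sub_mul, mul_one, sum_sub_distrib]
  ring
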